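/- arXiv:1802.02659 — 4 statements merged into one kernel-verified Lean document; each statement's English description precedes it below -/
import Mathlib

section
/- There exist an index j₀ ≥ 1, constants 0 < c₁ < c₂, and a sequence (m_j)_{j ≥ j₀} of prime numbers such that c₁ · j^(1/4) ≤ m_j ≤ c₂ · j^(1/4) for all j ≥ j₀, and m_j ≠ m_i whenever j₀ ≤ i < j and j − 3·log j < i. -/
open Finset

/-- Chebyshev-type lower bound: `2^s ≤ s * (π(2^s) + 2)`. -/
lemma cheb_lower (s : ℕ) (hs : 3 ≤ s) :
    2 ^ s ≤ s * (Nat.count Nat.Prime (2 ^ s) + 2) := by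
  set n := 2 ^ (s - 1) with hn
  have h2n : 2 * n = 2 ^ s := by
    rw [hn, ← pow_succ']
    congr 1
    omega
  have hn4 : 4 ≤ n := by
    calc 4 = 2 ^ 2 := rfl
    _ ≤ 2 ^ (s - 1) := Nat.pow_le_pow_right (by norm_num) (by omega)
  have hCB : Nat.centralBinom n ≤ (2 * n) ^ (Nat.count Nat.Prime (2 * n + 1)) := by
    have hne : Nat.centralBinom n ≠ 0 := (Nat.centralBinom_pos n).ne'
    have hfac := Nat.factorization_prod_pow_eq_self hne
    have hsub : (Nat.centralBinom n).factorization.support ⊆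
        Finset.filter Nat.Prime (Finset.range (2 * n + 1)) := by
      intro p hp
      have hprime : p.Prime := Nat.prime_of_mem_primeFactors hp
      have hfp : (Nat.centralBinom n).factorization p ≠ 0 := by
        simpa using (Finsupp.mem_support_iff.mp hp)
      have hple : p ≤ 2 * n := by
        calc p = p ^ 1 := (pow_one p).symm
        _ ≤ p ^ (Nat.centralBinom n).factorization p :=
            Nat.pow_le_pow_right hprime.pos (by omega)
        _ ≤ 2 * n := Nat.pow_factorization_choose_le (by omega)
      simp [Finset.mem_filter, Finset.mem_range, hprime]
      omega
    calc Nat.centralBinom n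
        = ∏ p ∈ (Nat.centralBinom n).factorization.support,
            p ^ (Nat.centralBinom n).factorization p := by
          conv_lhs => rw [← hfac]
          rfl
      _ ≤ (2 * n) ^ (Nat.centralBinom n).factorization.support.card := by
          apply Finset.prod_le_pow_card
          intro p hp
          exact Nat.pow_factorization_choose_le (by omega)
      _ ≤ (2 * n) ^ (Nat.count Nat.Prime (2 * n + 1)) := by
          apply Nat.pow_le_pow_right (by omega)
          rw [Nat.count_eq_card_filter_range]
          exact Finset.card_le_card hsub
  have h4 : 4 ^ n < n * Nat.centralBinom n := Nat.four_pow_lt_mul_centralBinom n hn4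
  have hkey : 4 ^ n < (2 * n) ^ (Nat.count Nat.Prime (2 * n + 1) + 1) := by
    calc 4 ^ n < n * Nat.centralBinom n := h4
    _ ≤ (2 * n) * (2 * n) ^ (Nat.count Nat.Prime (2 * n + 1)) := by
        exact Nat.mul_le_mul (by omega) hCB
    _ = (2 * n) ^ (Nat.count Nat.Prime (2 * n + 1) + 1) := by ring
  have hc1 : Nat.count Nat.Prime (2 * n + 1) ≤ Nat.count Nat.Prime (2 * n) + 1 := by
    rw [Nat.count_succ]; split <;> omega
  have h4n : (4:ℕ) ^ n = 2 ^ (2 ^ s) := by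
    rw [show (4:ℕ) = 2^2 from rfl, ← pow_mul, ← h2n]
  have h2ns : (2*n) ^ (Nat.count Nat.Prime (2 * n + 1) + 1)
      = 2 ^ (s * (Nat.count Nat.Prime (2 * n + 1) + 1)) := by
    rw [h2n, ← pow_mul]
  rw [h4n, h2ns] at hkey
  have := (Nat.pow_lt_pow_iff_right (a := 2) (by norm_num)).mp hkey
  rw [show 2*n+1 = 2^s+1 by omega] at this
  rw [h2n] at hc1
  have hmul : s * (Nat.count Nat.Prime (2 ^ s + 1) + 1) ≤
      s * (Nat.count Nat.Prime (2 ^ s) + 2) := Nat.mul_le_mul_left s (by omega)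
  omega

/-- Primorial-type upper bound: primes in `[2^u, 2^t)` are few. -/
lemma band_upper (u t : ℕ) (hut : u ≤ t) :
    u * (Nat.count Nat.Prime (2 ^ t) - Nat.count Nat.Prime (2 ^ u)) ≤ 2 ^ (t + 1) := by
  set S := Finset.filter Nat.Prime (Finset.Ico (2 ^ u) (2 ^ t)) with hS
  have hcard : Nat.count Nat.Prime (2 ^ t) - Nat.count Nat.Prime (2 ^ u) = S.card := by
    rw [Nat.count_eq_card_filter_range, Nat.count_eq_card_filter_range]
    rw [Finset.range_eq_Ico]
    have hsplit : Finset.Ico 0 (2 ^ u) ∪ Finset.Ico (2 ^ u) (2 ^ t) = Finset.Ico 0 (2 ^ t) :=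
      Finset.Ico_union_Ico_eq_Ico (Nat.zero_le _) (Nat.pow_le_pow_right (by norm_num) hut)
    rw [← hsplit, Finset.filter_union, Finset.card_union_of_disjoint]
    · rw [Finset.range_eq_Ico, Nat.add_sub_cancel_left, hS]
    · exact Finset.disjoint_filter_filter (Finset.Ico_disjoint_Ico_consecutive _ _ _)
  have hprod1 : (2 ^ u) ^ S.card ≤ ∏ p ∈ S, p := by
    apply Finset.pow_card_le_prod
    intro p hp
    exact (Finset.mem_Ico.mp (Finset.mem_filter.mp hp).1).1
  have hprod2 : ∏ p ∈ S, p ≤ primorial (2 ^ t) := by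
    apply Finset.prod_le_prod_of_subset_of_one_le'
    · intro p hp
      have := Finset.mem_filter.mp hp
      simp only [Finset.mem_filter, Finset.mem_range]
      exact ⟨by have := (Finset.mem_Ico.mp this.1).2; omega, this.2⟩
    · intro p hp _
      exact (Finset.mem_filter.mp hp).2.one_lt.le
  have hprim : primorial (2 ^ t) ≤ 4 ^ (2 ^ t) := primorial_le_4_pow _
  have hchain : (2:ℕ) ^ (u * S.card) ≤ 2 ^ (2 ^ (t + 1)) := by
    calc (2:ℕ) ^ (u * S.card) = (2 ^ u) ^ S.card := by rw [pow_mul]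
    _ ≤ ∏ p ∈ S, p := hprod1
    _ ≤ primorial (2 ^ t) := hprod2
    _ ≤ 4 ^ (2 ^ t) := hprim
    _ = 2 ^ (2 ^ (t + 1)) := by rw [show (4:ℕ) = 2 ^ 2 from rfl, ← pow_mul, pow_succ]; ring_nf
  rw [hcard]
  exact (Nat.pow_le_pow_iff_right (by norm_num)).mp hchain

lemma four_mul_le_two_pow (q : ℕ) (hq : 5 ≤ q) : 4 * q + 3 ≤ 2 ^ q := by
  induction q with
  | zero => omega
  | succ q ih =>
    rcases Nat.lt_or_ge q 5 with h | h
    · interval_cases q <;> simp_all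
    · have := ih h
      have h2 : (4:ℕ) ≤ 2 ^ q := by
        calc (4:ℕ) ≤ 4 * q + 3 := by omega
        _ ≤ 2 ^ q := this
      rw [pow_succ]
      omega

lemma le_two_pow_div_four (t : ℕ) (ht : 20 ≤ t) : t ≤ 2 ^ (t / 4) := by
  have hq : 5 ≤ t / 4 := by omega
  have := four_mul_le_two_pow (t / 4) hq
  omega

/-- Key counting fact: the interval `[2^t, 2^(t+6))` contains at least `6(t+2)^2` primes. -/
lemma key_count (t : ℕ) (ht : 64 ≤ t) :
    Nat.count Nat.Prime (2 ^ t) + 6 * (t + 2) ^ 2 ≤ Nat.count Nat.Prime (2 ^ (t + 6)) := by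
  set u := t / 2 + 1 with hu
  set A := Nat.count Nat.Prime (2 ^ t) with hA
  set B := Nat.count Nat.Prime (2 ^ u) with hB
  set C := Nat.count Nat.Prime (2 ^ (t + 6)) with hC
  set H := (2:ℕ) ^ (t / 2) with hH
  have h1 : 2 ^ (t + 6) ≤ (t + 6) * (C + 2) := cheb_lower (t + 6) (by omega)
  have hut : u ≤ t := by omega
  have h2 : u * (A - B) ≤ 2 ^ (t + 1) := band_upper u t hut
  have hAB : B ≤ A := Nat.count_monotone _ (Nat.pow_le_pow_right (by norm_num) hut)
  have hBH : (2:ℕ) ^ u = 2 * H := by rw [hu, hH, pow_succ]; ring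
  have h3 : B ≤ 2 * H := by rw [← hBH, hB]; exact Nat.count_le _
  have hHH : H * H ≤ 2 ^ t := by
    rw [hH, ← pow_add]
    exact Nat.pow_le_pow_right (by norm_num) (by omega)
  have ht4 : t ≤ 2 ^ (t / 4) := le_two_pow_div_four t (by omega)
  have htH : t ^ 2 ≤ H := by
    calc t ^ 2 ≤ (2 ^ (t / 4)) ^ 2 := Nat.pow_le_pow_left ht4 2
    _ = 2 ^ (2 * (t / 4)) := by rw [← pow_mul]; ring_nf
    _ ≤ H := Nat.pow_le_pow_right (by norm_num) (by omega)
  by_contra hcon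
  push_neg at hcon
  set D := A - B with hD
  have hAeq : A = B + D := by omega
  have hmain : u * 2 ^ (t + 6) ≤ (t + 6) * 2 ^ (t + 1) + u * (t + 6) * (2 * H)
      + u * (t + 6) * (6 * (t + 2) ^ 2 + 1) := by
    calc u * 2 ^ (t + 6) ≤ u * ((t + 6) * (C + 2)) := Nat.mul_le_mul_left u h1
    _ ≤ u * ((t + 6) * (B + D + 6 * (t + 2) ^ 2 + 1)) := by
        apply Nat.mul_le_mul_left
        apply Nat.mul_le_mul_left
        omega
    _ = (t + 6) * (u * D) + u * (t + 6) * B + u * (t + 6) * (6 * (t + 2) ^ 2 + 1) := by ring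
    _ ≤ (t + 6) * 2 ^ (t + 1) + u * (t + 6) * (2 * H)
        + u * (t + 6) * (6 * (t + 2) ^ 2 + 1) := by
        gcongr
  have hE1 : (t + 6) * 2 ^ (t + 1) = (2 * t + 12) * 2 ^ t := by rw [pow_succ]; ring
  have hE2 : u * (t + 6) * (2 * H) ≤ 4 * 2 ^ t := by
    calc u * (t + 6) * (2 * H) ≤ t * (2 * t) * (2 * H) := by
          apply Nat.mul_le_mul
          apply Nat.mul_le_mul hut (by omega)
          exact le_refl _
    _ = 4 * (t ^ 2 * H) := by ring
    _ ≤ 4 * (H * H) := by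
          apply Nat.mul_le_mul_left
          exact Nat.mul_le_mul_right H htH
    _ ≤ 4 * 2 ^ t := Nat.mul_le_mul_left 4 hHH
  have hE3 : u * (t + 6) * (6 * (t + 2) ^ 2 + 1) ≤ 50 * 2 ^ t := by
    have ht4' : t ^ 4 ≤ 2 ^ t := by
      calc t ^ 4 ≤ (2 ^ (t / 4)) ^ 4 := Nat.pow_le_pow_left ht4 4
      _ = 2 ^ (4 * (t / 4)) := by rw [← pow_mul]; ring_nf
      _ ≤ 2 ^ t := Nat.pow_le_pow_right (by norm_num) (by omega)
    calc u * (t + 6) * (6 * (t + 2) ^ 2 + 1) ≤ t * (2 * t) * (25 * t ^ 2) := by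
          apply Nat.mul_le_mul
          apply Nat.mul_le_mul hut (by omega)
          nlinarith
    _ = 50 * t ^ 4 := by ring
    _ ≤ 50 * 2 ^ t := Nat.mul_le_mul_left 50 ht4'
  have hlow : 32 * (t - 1) * 2 ^ t ≤ u * 2 ^ (t + 6) := by
    have h64 : 32 * (t - 1) ≤ u * 64 := by omega
    calc 32 * (t - 1) * 2 ^ t ≤ u * 64 * 2 ^ t := Nat.mul_le_mul_right _ h64
    _ = u * 2 ^ (t + 6) := by rw [show (2:ℕ) ^ (t + 6) = 64 * 2 ^ t by rw [pow_add]; ring]; ring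
  have hfin : 32 * (t - 1) * 2 ^ t ≤ (2 * t + 66) * 2 ^ t := by
    calc 32 * (t - 1) * 2 ^ t ≤ u * 2 ^ (t + 6) := hlow
    _ ≤ (2 * t + 12) * 2 ^ t + 4 * 2 ^ t + 50 * 2 ^ t := by rw [← hE1] at *; omega
    _ = (2 * t + 66) * 2 ^ t := by ring
  have hpos : 0 < 2 ^ t := Nat.pow_pos (by norm_num)
  have := Nat.le_of_mul_le_mul_right hfin hpos
  omega

/-! ### The construction -/

def pmA (t : ℕ) : ℕ := Nat.count Nat.Prime (2 ^ t)
def pmW (t : ℕ) : ℕ := 9 * (t + 1)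
def pmB : ℕ → ℕ
  | 0 => pmA 0
  | (t+1) => max (pmA (t+1)) (pmB t + pmW t)
noncomputable def pmM (j : ℕ) : ℕ :=
  Nat.nth Nat.Prime (pmB (Nat.log 16 j) + j % pmW (Nat.log 16 j))

lemma pmA_le_pmB (t : ℕ) : pmA t ≤ pmB t := by
  cases t with
  | zero => exact le_refl _
  | succ t => exact le_max_left _ _

lemma pmB_add_pmW_le (t : ℕ) : pmB t + pmW t ≤ pmB (t + 1) := le_max_right _ _

lemma pmB_mono : Monotone pmB :=
  monotone_nat_of_le_succ fun t => le_trans (Nat.le_add_right _ _) (pmB_add_pmW_le t)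

lemma pmB_le (t : ℕ) : pmB t ≤ pmA t + 5 * (t + 2) ^ 2 := by
  induction t with
  | zero => simp [pmB]
  | succ t ih =>
    have hA : pmA t ≤ pmA (t + 1) :=
      Nat.count_monotone _ (Nat.pow_le_pow_right (by norm_num) (by omega))
    have hstep : pmB t + pmW t ≤ pmA (t + 1) + 5 * (t + 1 + 2) ^ 2 := by
      have h1 : pmB t + pmW t ≤ pmA t + 5 * (t + 2) ^ 2 + 9 * (t + 1) := by
        unfold pmW; omega
      refine h1.trans ?_
      have h2 : 5 * (t + 2) ^ 2 + 9 * (t + 1) ≤ 5 * (t + 1 + 2) ^ 2 := by nlinarith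
      omega
    simp only [pmB]
    omega

lemma pmB_window (t : ℕ) (ht : 64 ≤ t) :
    pmB t + pmW t ≤ Nat.count Nat.Prime (2 ^ (t + 6)) := by
  have h1 := pmB_le t
  have h2 := key_count t ht
  have h3 : 5 * (t + 2) ^ 2 + 9 * (t + 1) ≤ 6 * (t + 2) ^ 2 := by nlinarith
  unfold pmW at *
  unfold pmA at h1
  omega

lemma infp : (setOf Nat.Prime).Infinite := Nat.infinite_setOf_prime

lemma pmM_bounds (j : ℕ) (hj : 16 ^ 64 ≤ j) :
    (pmM j).Prime ∧ 2 ^ (Nat.log 16 j) ≤ pmM j ∧ pmM j < 2 ^ (Nat.log 16 j + 6) := by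
  set t := Nat.log 16 j with htdef
  have ht : 64 ≤ t := by
    have := Nat.log_mono_right (b := 16) hj
    rwa [Nat.log_pow (by norm_num)] at this
  have hwpos : 0 < pmW t := by unfold pmW; omega
  have hidx : pmB t + j % pmW t < Nat.count Nat.Prime (2 ^ (t + 6)) :=
    lt_of_lt_of_le (Nat.add_lt_add_left (Nat.mod_lt j hwpos) _) (pmB_window t ht)
  refine ⟨Nat.prime_nth_prime _, ?_, ?_⟩
  · calc 2 ^ t ≤ Nat.nth Nat.Prime (Nat.count Nat.Prime (2 ^ t)) := Nat.le_nth_count infp _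
    _ ≤ pmM j := by
        apply (Nat.nth_le_nth infp).mpr
        exact le_trans (pmA_le_pmB t) (Nat.le_add_right _ _)
  · exact (Nat.lt_nth_iff_count_lt infp).mp hidx

lemma pmM_ne (i j : ℕ) (hij : i < j) (hwin : j - i < pmW (Nat.log 16 j)) :
    pmM j ≠ pmM i := by
  have hmono : StrictMono (Nat.nth Nat.Prime) := fun a b h => (Nat.nth_lt_nth infp).mpr h
  set ti := Nat.log 16 i with hti
  set tj := Nat.log 16 j with htj
  have htij : ti ≤ tj := Nat.log_mono_right hij.le
  rcases Nat.lt_or_ge ti tj with h | h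
  · have hlt : pmB ti + i % pmW ti < pmB tj + j % pmW tj := by
      calc pmB ti + i % pmW ti < pmB ti + pmW ti :=
            Nat.add_lt_add_left (Nat.mod_lt i (by unfold pmW; omega)) _
      _ ≤ pmB (ti + 1) := pmB_add_pmW_le ti
      _ ≤ pmB tj := pmB_mono h
      _ ≤ pmB tj + j % pmW tj := Nat.le_add_right _ _
    exact (hmono hlt).ne'
  · have heq : ti = tj := le_antisymm htij h
    intro hcon
    have hinj := hmono.injective hcon
    rw [← hti, ← htj, heq] at hinj
    have hmod : j % pmW tj = i % pmW tj := by omega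
    have hdvd : pmW tj ∣ j - i := (Nat.modEq_iff_dvd' hij.le).mp hmod.symm
    have := Nat.le_of_dvd (by omega) hdvd
    omega

lemma rpow16 (k : ℕ) : ((16:ℝ) ^ k) ^ ((1:ℝ)/4) = 2 ^ k := by
  have h16 : ((16:ℝ) ^ k) = ((2:ℝ) ^ k) ^ (4:ℕ) := by
    rw [← pow_mul, show (16:ℝ) = 2 ^ (4:ℕ) by norm_num, ← pow_mul]
    ring_nf
  rw [h16, ← Real.rpow_natCast ((2:ℝ) ^ k) 4, ← Real.rpow_mul (by positivity)]
  norm_num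



/-- There is an index `j₀ ≥ 1`, constants `0 < c₁ < c₂`, and a sequence `(m_j)` of primes
with `c₁ j^(1/4) ≤ m_j ≤ c₂ j^(1/4)` for `j ≥ j₀`, such that `m_j ≠ m_i` whenever
`j₀ ≤ i < j` and `j − 3 log j < i`. -/
theorem exists_prime_moduli :
    ∃ (j₀ : ℕ) (c₁ c₂ : ℝ) (m : ℕ → ℕ), 1 ≤ j₀ ∧ 0 < c₁ ∧ c₁ < c₂ ∧
      (∀ j : ℕ, j₀ ≤ j → (m j).Prime ∧
        c₁ * (j : ℝ) ^ ((1 : ℝ) / 4) ≤ (m j : ℝ) ∧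
        (m j : ℝ) ≤ c₂ * (j : ℝ) ^ ((1 : ℝ) / 4)) ∧
      ∀ i j : ℕ, j₀ ≤ i → i < j → (j : ℝ) - 3 * Real.log j < (i : ℝ) →
        m j ≠ m i := by
  refine ⟨16 ^ 64, 1/2, 64, pmM, Nat.one_le_pow _ _ (by norm_num), by norm_num, by norm_num,
    ?_, ?_⟩
  · intro j hj
    obtain ⟨hp, hlo, hhi⟩ := pmM_bounds j hj
    set t := Nat.log 16 j with htdef
    have hj0 : 0 < j := lt_of_lt_of_le (Nat.pow_pos (by norm_num)) hj
    have hjl : (16:ℝ) ^ t ≤ (j:ℝ) := by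
      exact_mod_cast Nat.pow_log_le_self 16 hj0.ne'
    have hju : (j:ℝ) ≤ (16:ℝ) ^ (t + 1) := by
      have h := Nat.lt_pow_succ_log_self (b := 16) (by norm_num) j
      exact_mod_cast h.le
    have hjnn : (0:ℝ) ≤ (j:ℝ) := Nat.cast_nonneg j
    have h1 : (j:ℝ) ^ ((1:ℝ)/4) ≤ 2 ^ (t+1) := by
      rw [← rpow16 (t+1)]
      exact Real.rpow_le_rpow hjnn hju (by norm_num)
    have h2 : (2:ℝ) ^ t ≤ (j:ℝ) ^ ((1:ℝ)/4) := by
      rw [← rpow16 t]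
      exact Real.rpow_le_rpow (by positivity) hjl (by norm_num)
    have hloR : (2:ℝ) ^ t ≤ (pmM j : ℝ) := by exact_mod_cast hlo
    have hhiR : (pmM j : ℝ) ≤ 2 ^ (t + 6) := by exact_mod_cast hhi.le
    refine ⟨hp, ?_, ?_⟩
    · have := mul_le_mul_of_nonneg_left h1 (by norm_num : (0:ℝ) ≤ 1/2)
      have hps : (2:ℝ) ^ (t+1) = 2 * 2 ^ t := by rw [pow_succ]; ring
      rw [hps] at this
      linarith
    · have := mul_le_mul_of_nonneg_left h2 (by norm_num : (0:ℝ) ≤ 64)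
      have hps : (2:ℝ) ^ (t+6) = 64 * 2 ^ t := by rw [pow_add]; norm_num; ring
      rw [hps] at hhiR
      linarith
  · intro i j hi hij hlog
    have hj16 : 16 ^ 64 ≤ j := le_trans hi hij.le
    set t := Nat.log 16 j with htdef
    have hj0 : 0 < j := lt_of_lt_of_le (Nat.pow_pos (by norm_num)) hj16
    have hju : (j:ℝ) ≤ (16:ℝ) ^ (t + 1) := by
      have h := Nat.lt_pow_succ_log_self (b := 16) (by norm_num) j
      exact_mod_cast h.le
    have ht0 : (0:ℝ) ≤ (t:ℝ) + 1 := by positivity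
    have hlogj : Real.log j ≤ ((t:ℝ)+1) * (4 * Real.log 2) := by
      calc Real.log j ≤ Real.log ((16:ℝ) ^ (t+1)) :=
            Real.log_le_log (by exact_mod_cast hj0) hju
      _ = ((t:ℝ)+1) * Real.log 16 := by rw [Real.log_pow]; push_cast; ring
      _ = ((t:ℝ)+1) * (4 * Real.log 2) := by
            rw [show (16:ℝ) = 2 ^ (4:ℕ) by norm_num, Real.log_pow]; push_cast; ring
    have hl2 : Real.log 2 < 0.6931471808 := Real.log_two_lt_d9
    have h3 : 3 * Real.log j ≤ 9 * ((t:ℝ) + 1) := by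
      have hm : ((t:ℝ)+1) * (4 * Real.log 2) ≤ ((t:ℝ)+1) * (4 * 0.6931471808) := by
        apply mul_le_mul_of_nonneg_left _ ht0
        nlinarith
      nlinarith
    have hw : (j:ℝ) < (i:ℝ) + 9 * ((t:ℝ) + 1) := by linarith
    have hwn : j < i + 9 * (t + 1) := by
      have hw' : (j:ℝ) < ((i + 9 * (t + 1) : ℕ) : ℝ) := by push_cast; linarith
      exact_mod_cast hw'
    apply pmM_ne i j hij
    unfold pmW
    omega
end

section
/- Borel–Bernstein theorem (convergence part): Let (b_n)_n be a sequence of positive reals with ∑_{n≥1} 1/b_n < ∞. Then for Lebesgue-almost every α ∈ [0,1] with continued fraction expansion [a₁, a₂, ...], one has a_n ≤ b_n for all sufficiently large n. -/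
open MeasureTheory

noncomputable section
namespace BorelBernstein
open Set Filter GenContFract

/-- The Gauss map. -/
def G : ℝ → ℝ := fun x => Int.fract x⁻¹

lemma measurable_G : Measurable G := measurable_inv.fract

lemma G_zero : G 0 = 0 := by simp [G]

lemma iterate_G_zero (n : ℕ) : G^[n] 0 = 0 := Function.iterate_fixed G_zero n

/-- The (unnormalized) Gauss density. -/
def d : ℝ → ENNReal := fun x => ENNReal.ofReal ((1 + x)⁻¹)

lemma measurable_d : Measurable d :=
  ((measurable_const.add measurable_id).inv).ennreal_ofReal

/-- The (unnormalized) Gauss measure. -/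
def ν : Measure ℝ := volume.withDensity d


lemma stream_fr {α : ℝ} (hα : α ∈ Ioo (0:ℝ) 1) :
    ∀ {n : ℕ} {ifp : IntFractPair ℝ}, IntFractPair.stream α n = some ifp →
      ifp.fr = G^[n] α := by
  intro n
  induction n with
  | zero =>
    intro ifp h
    rw [IntFractPair.stream_zero] at h
    cases h
    simp [IntFractPair.of, Int.fract_eq_self.mpr ⟨hα.1.le, hα.2⟩]
  | succ n ih =>
    intro ifp h
    obtain ⟨p, hp, hpfr, rfl⟩ := IntFractPair.succ_nth_stream_eq_some_iff.mp h
    rw [Function.iterate_succ_apply', ← ih hp]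
    rfl

lemma stream_b {α : ℝ} (hα : α ∈ Ioo (0:ℝ) 1) {n : ℕ} {ifp : IntFractPair ℝ}
    (h : IntFractPair.stream α (n + 1) = some ifp) :
    G^[n] α ≠ 0 ∧ ifp.b = ⌊(G^[n] α)⁻¹⌋ := by
  obtain ⟨p, hp, hpfr, rfl⟩ := IntFractPair.succ_nth_stream_eq_some_iff.mp h
  rw [← stream_fr hα hp]
  exact ⟨hpfr, rfl⟩

/-- If the `n`-th partial denominator of `α ∈ (0,1)` exists and is `a`, then
`G^[n] α ∈ (0,1)` and `a = ⌊(G^[n] α)⁻¹⌋`. -/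
lemma partDen_eq {α : ℝ} (hα : α ∈ Ioo (0:ℝ) 1) {n : ℕ} {a : ℝ}
    (h : (GenContFract.of α).partDens.get? n = some a) :
    G^[n] α ∈ Ioo (0:ℝ) 1 ∧ a = (⌊(G^[n] α)⁻¹⌋ : ℤ) := by
  obtain ⟨gp, hgp, hgpb⟩ := exists_s_b_of_partDen h
  obtain ⟨ifp, hifp, hifpb⟩ := IntFractPair.exists_succ_get?_stream_of_gcf_of_get?_eq_some hgp
  obtain ⟨hne, hb⟩ := stream_b hα hifp
  have hmem : 0 ≤ G^[n] α ∧ G^[n] α < 1 := by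
    cases n with
    | zero => exact ⟨hα.1.le, hα.2⟩
    | succ n =>
      rw [Function.iterate_succ_apply']
      exact ⟨Int.fract_nonneg _, Int.fract_lt_one _⟩
  refine ⟨⟨lt_of_le_of_ne hmem.1 (Ne.symm hne), hmem.2⟩, ?_⟩
  rw [← hgpb, ← hifpb, hb]


/-- piece set equality -/
lemma preim_piece (k : ℕ) {E : Set ℝ} (hE1 : E ⊆ Ioo 0 1) :
    G ⁻¹' E ∩ Ioo (((k:ℝ)+2)⁻¹) (((k:ℝ)+1)⁻¹)
      = (fun y => (y + ((k:ℝ)+1))⁻¹) '' E := by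
  have hk1 : (0:ℝ) < (k:ℝ) + 1 := by positivity
  have hk2 : (0:ℝ) < (k:ℝ) + 2 := by positivity
  ext x
  constructor
  · rintro ⟨hGx, hx1, hx2⟩
    have hx0 : 0 < x := lt_trans (by positivity) hx1
    have h1 : (k:ℝ) + 1 < x⁻¹ := by
      rw [← inv_inv ((k:ℝ)+1)]
      exact inv_strictAnti₀ hx0 hx2
    have h2 : x⁻¹ < (k:ℝ) + 2 := by
      rw [← inv_inv ((k:ℝ)+2)]
      exact inv_strictAnti₀ (by positivity) hx1
    have hfloor : ⌊x⁻¹⌋ = (k:ℤ) + 1 := by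
      rw [Int.floor_eq_iff]
      constructor
      · push_cast; linarith
      · push_cast; linarith
    have hfract : G x = x⁻¹ - ((k:ℝ) + 1) := by
      simp only [G, Int.fract, hfloor]; push_cast; ring
    refine ⟨x⁻¹ - ((k:ℝ)+1), ?_, ?_⟩
    · rw [← hfract]; exact hGx
    · show (x⁻¹ - ((k:ℝ)+1) + ((k:ℝ)+1))⁻¹ = x
      have : x⁻¹ - ((k:ℝ)+1) + ((k:ℝ)+1) = x⁻¹ := by ring
      rw [this, inv_inv]
  · rintro ⟨y, hy, rfl⟩
    obtain ⟨hy0, hy1⟩ := hE1 hy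
    have hyk : (0:ℝ) < y + ((k:ℝ)+1) := by linarith
    have hGx : G (y + ((k:ℝ)+1))⁻¹ = y := by
      have : ((k:ℝ) + 1) = ((k + 1 : ℤ) : ℝ) := by push_cast; ring
      rw [G, inv_inv, this, Int.fract_add_intCast, Int.fract_eq_self.mpr ⟨hy0.le, hy1⟩]
    refine ⟨by rw [mem_preimage, hGx]; exact hy, ?_, ?_⟩
    · exact inv_strictAnti₀ hyk (by linarith)
    · exact inv_strictAnti₀ hk1 (by linarith)


/-- 1-D change of variables for lintegral. -/
lemma lintegral_image_1d {s : Set ℝ} {f f' : ℝ → ℝ} (hs : MeasurableSet s)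
    (hf' : ∀ x ∈ s, HasDerivWithinAt f (f' x) s x) (hf : InjOn f s) (g : ℝ → ENNReal) :
    ∫⁻ x in f '' s, g x = ∫⁻ x in s, ENNReal.ofReal |f' x| * g (f x) := by
  simpa only [ContinuousLinearMap.det_toSpanSingleton] using
    lintegral_image_eq_lintegral_abs_det_fderiv_mul volume hs
      (fun x hx => (hf' x hx).hasFDerivWithinAt) hf g

lemma piece_measure (k : ℕ) {E : Set ℝ} (hE : MeasurableSet E) (hE1 : E ⊆ Ioo 0 1)
    (himg : MeasurableSet ((fun y => (y + ((k:ℝ)+1))⁻¹) '' E)) :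
    ν ((fun y => (y + ((k:ℝ)+1))⁻¹) '' E)
      = ∫⁻ y in E, ENNReal.ofReal (((y+(k:ℝ)+1) * (y+(k:ℝ)+2))⁻¹) := by
  rw [ν, withDensity_apply _ himg]
  rw [lintegral_image_1d hE (f' := fun y => -(((y + ((k:ℝ)+1)) ^ 2)⁻¹))
    (fun y hy => ?_) (fun y hy z hz h => ?_) d]
  · refine setLIntegral_congr_fun hE (fun y hy => ?_)
    obtain ⟨hy0, hy1⟩ := hE1 hy
    have hyk : (0:ℝ) < y + ((k:ℝ)+1) := by positivity
    rw [d, ← ENNReal.ofReal_mul (by positivity)]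
    congr 1
    rw [abs_of_nonpos (neg_nonpos.mpr (by positivity)), neg_neg]
    field_simp
    ring
  · have h0 : y + ((k:ℝ)+1) ≠ 0 := by
      have := (hE1 hy).1; positivity
    have h := (((hasDerivAt_id y).add_const (((k:ℝ)+1))).inv h0).hasDerivWithinAt (s := E)
    simpa [neg_div, div_eq_mul_inv, Pi.inv_def] using h
  · have := inv_injective h
    linarith [this]


/-- telescoping sum -/
lemma telescope (y : ℝ) (hy : 0 < y) :
    ∑' k : ℕ, ENNReal.ofReal (((y+(k:ℝ)+1) * (y+(k:ℝ)+2))⁻¹)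
      = ENNReal.ofReal ((1 + y)⁻¹) := by
  set F : ℕ → ℝ := fun k => (y + (k:ℝ) + 1)⁻¹ with hF
  have hterm : ∀ k : ℕ, ((y+(k:ℝ)+1) * (y+(k:ℝ)+2))⁻¹ = F k - F (k+1) := by
    intro k
    have h1 : (0:ℝ) < y + (k:ℝ) + 1 := by positivity
    have h2 : (0:ℝ) < y + (k:ℝ) + 2 := by positivity
    rw [hF]
    push_cast
    have e : y + ((k:ℝ) + 1) + 1 = y + (k:ℝ) + 2 := by ring
    rw [e, inv_sub_inv (by linarith) (by linarith)]
    rw [div_eq_inv_mul]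
    norm_num
  have htend : Tendsto F atTop (nhds 0) := by
    apply Tendsto.comp tendsto_inv_atTop_zero
    apply tendsto_atTop_add_const_right
    apply tendsto_atTop_add_const_left
    exact tendsto_natCast_atTop_atTop
  have hsum : HasSum (fun k => F k - F (k+1)) (F 0) := by
    rw [hasSum_iff_tendsto_nat_of_nonneg]
    · have : ∀ n : ℕ, ∑ i ∈ Finset.range n, (F i - F (i+1)) = F 0 - F n := by
        intro n; exact Finset.sum_range_sub' F n
      simp only [this]
      simpa using (tendsto_const_nhds (x := F 0)).sub htend
    · intro i
      have h1 : (0:ℝ) < y + (i:ℝ) + 1 := by positivity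
      have h2 : (0:ℝ) < y + (i:ℝ) + 2 := by positivity
      have : F i - F (i+1) = ((y+(i:ℝ)+1) * (y+(i:ℝ)+2))⁻¹ := (hterm i).symm
      rw [this]; positivity
  have hF0 : F 0 = (1 + y)⁻¹ := by rw [hF]; norm_num; ring_nf
  calc ∑' k : ℕ, ENNReal.ofReal (((y+(k:ℝ)+1) * (y+(k:ℝ)+2))⁻¹)
      = ∑' k : ℕ, ENNReal.ofReal (F k - F (k+1)) := by
        congr 1; ext k; rw [hterm k]
    _ = ENNReal.ofReal (∑' k : ℕ, (F k - F (k+1))) := by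
        rw [ENNReal.ofReal_tsum_of_nonneg (fun k => by
          rw [← hterm k]; positivity) hsum.summable]
    _ = ENNReal.ofReal ((1 + y)⁻¹) := by rw [hsum.tsum_eq, hF0]


lemma pieces_disjoint :
    Pairwise (Function.onFun Disjoint fun k : ℕ => Ioo (((k:ℝ)+2)⁻¹) (((k:ℝ)+1)⁻¹)) := by
  intro k j hkj
  wlog h : k < j generalizing k j
  · exact (this hkj.symm (by omega)).symm
  simp only [Function.onFun]
  rw [Set.disjoint_left]
  rintro x ⟨hx1, hx2⟩ ⟨hx3, hx4⟩
  have hj1 : ((j:ℝ)+1)⁻¹ ≤ ((k:ℝ)+2)⁻¹ := by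
    apply inv_anti₀ (by positivity)
    have : (k:ℝ) + 1 ≤ (j:ℝ) := by exact_mod_cast h
    linarith
  linarith

lemma piece_subset (k : ℕ) : Ioo (((k:ℝ)+2)⁻¹) (((k:ℝ)+1)⁻¹) ⊆ Ioo (0:ℝ) 1 := by
  intro x ⟨h1, h2⟩
  refine ⟨lt_trans (by positivity) h1, lt_of_lt_of_le h2 ?_⟩
  rw [inv_le_one_iff₀]
  right; push_cast; linarith [Nat.cast_nonneg (α := ℝ) k]

lemma cover_aux :
    Ioo (0:ℝ) 1 ⊆ (⋃ k : ℕ, Ioo (((k:ℝ)+2)⁻¹) (((k:ℝ)+1)⁻¹)) ∪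
      range (fun k : ℕ => ((k:ℝ))⁻¹) := by
  rintro x ⟨hx0, hx1⟩
  have hxinv : 1 < x⁻¹ := (one_lt_inv₀ hx0).mpr hx1
  set m := ⌊x⁻¹⌋₊ with hm
  have hm1 : 1 ≤ m := Nat.le_floor (by exact_mod_cast hxinv.le)
  have hmle : (m:ℝ) ≤ x⁻¹ := Nat.floor_le (by positivity)
  have hmlt : x⁻¹ < (m:ℝ) + 1 := Nat.lt_floor_add_one _
  rcases eq_or_lt_of_le hmle with heq | hlt
  · right
    exact ⟨m, by show ((m:ℝ))⁻¹ = x; rw [heq, inv_inv]⟩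
  · left
    refine mem_iUnion.mpr ⟨m - 1, ?_⟩
    have hcast : ((m - 1 : ℕ):ℝ) = (m:ℝ) - 1 := by
      rw [Nat.cast_sub hm1]; norm_num
    rw [hcast]
    have e1 : (m:ℝ) - 1 + 2 = (m:ℝ) + 1 := by ring
    have e2 : (m:ℝ) - 1 + 1 = (m:ℝ) := by ring
    rw [e1, e2]
    constructor
    · rw [← inv_inv x]
      exact inv_strictAnti₀ (by positivity) hmlt
    · rw [← inv_inv x]
      exact inv_strictAnti₀ (by positivity) hlt


/-- Invariance of the Gauss measure. -/
lemma nu_preimage {E : Set ℝ} (hE : MeasurableSet E) (hE1 : E ⊆ Ioo 0 1) :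
    ν (G ⁻¹' E ∩ Ioo 0 1) = ν E := by
  have hme : ∀ k : ℕ, MeasurableSet (G ⁻¹' E ∩ Ioo (((k:ℝ)+2)⁻¹) (((k:ℝ)+1)⁻¹)) :=
    fun k => (measurable_G hE).inter measurableSet_Ioo
  have hdisj : Pairwise (Function.onFun Disjoint
      fun k : ℕ => G ⁻¹' E ∩ Ioo (((k:ℝ)+2)⁻¹) (((k:ℝ)+1)⁻¹)) :=
    fun k j hkj => ((pieces_disjoint hkj).mono inter_subset_right inter_subset_right)
  have hR : ν (range fun k : ℕ => ((k:ℝ))⁻¹) = 0 :=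
    (withDensity_absolutelyContinuous volume d) ((countable_range _).measure_zero _)
  have hstep : ν (G ⁻¹' E ∩ Ioo 0 1)
      = ν (⋃ k : ℕ, G ⁻¹' E ∩ Ioo (((k:ℝ)+2)⁻¹) (((k:ℝ)+1)⁻¹)) := by
    apply le_antisymm
    · calc ν (G ⁻¹' E ∩ Ioo 0 1)
          ≤ ν ((⋃ k : ℕ, G ⁻¹' E ∩ Ioo (((k:ℝ)+2)⁻¹) (((k:ℝ)+1)⁻¹))
              ∪ range (fun k : ℕ => ((k:ℝ))⁻¹)) := by
            apply measure_mono
            rintro x ⟨hx1, hx2⟩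
            rcases cover_aux hx2 with h | h
            · obtain ⟨s, ⟨k, rfl⟩, hk⟩ := h
              exact Or.inl (mem_iUnion.mpr ⟨k, hx1, hk⟩)
            · exact Or.inr h
        _ ≤ _ := by
            apply (measure_union_le _ _).trans
            rw [hR, add_zero]
    · apply measure_mono
      apply iUnion_subset
      intro k
      exact inter_subset_inter_right _ (piece_subset k)
  rw [hstep, measure_iUnion hdisj hme]
  have hpm : ∀ k : ℕ, ν (G ⁻¹' E ∩ Ioo (((k:ℝ)+2)⁻¹) (((k:ℝ)+1)⁻¹))
      = ∫⁻ y in E, ENNReal.ofReal (((y+(k:ℝ)+1) * (y+(k:ℝ)+2))⁻¹) := by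
    intro k
    rw [preim_piece k hE1]
    exact piece_measure k hE hE1 (by rw [← preim_piece k hE1]; exact hme k)
  simp only [hpm]
  rw [← lintegral_tsum (f := fun (k:ℕ) (y:ℝ) => ENNReal.ofReal (((y+(k:ℝ)+1) * (y+(k:ℝ)+2))⁻¹)) (fun k => by
    have : Measurable (fun y : ℝ => ENNReal.ofReal (((y+(k:ℝ)+1) * (y+(k:ℝ)+2))⁻¹)) := by
      apply Measurable.ennreal_ofReal
      apply Measurable.inv
      exact ((measurable_id.add_const ((k:ℝ))).add_const 1).mul
        ((measurable_id.add_const ((k:ℝ))).add_const 2)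
    exact this.aemeasurable)]
  rw [show ν E = ∫⁻ y in E, d y from (withDensity_apply d hE)]
  apply setLIntegral_congr_fun hE
  intro y hy
  exact telescope y (hE1 hy).1


lemma nu_iter (n : ℕ) : ∀ {E : Set ℝ}, MeasurableSet E → E ⊆ Ioo 0 1 →
    ν ((G^[n]) ⁻¹' E ∩ Ioo 0 1) = ν E := by
  induction n with
  | zero =>
    intro E hE hE1
    simp only [Function.iterate_zero, preimage_id]
    rw [inter_eq_left.mpr hE1]
  | succ n ih =>
    intro E hE hE1
    have hseteq : (G^[n+1]) ⁻¹' E ∩ Ioo 0 1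
        = G ⁻¹' ((G^[n]) ⁻¹' E ∩ Ioo 0 1) ∩ Ioo 0 1 := by
      ext x
      simp only [mem_inter_iff, mem_preimage, Function.iterate_succ_apply]
      constructor
      · rintro ⟨hGE, hx⟩
        refine ⟨⟨hGE, ?_, Int.fract_lt_one _⟩, hx⟩
        rcases lt_or_eq_of_le (Int.fract_nonneg (x⁻¹)) with h | h
        · exact h
        · exfalso
          have : G x = 0 := h.symm
          rw [this, iterate_G_zero] at hGE
          exact (hE1 hGE).1.false
      · rintro ⟨⟨hGE, _⟩, hx⟩
        exact ⟨hGE, hx⟩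
    rw [hseteq, nu_preimage ((measurable_G.iterate n hE).inter measurableSet_Ioo)
      inter_subset_right, ih hE hE1]


theorem borel_bernstein_convergence' (b : ℕ → ℝ) (hb : ∀ n, 0 < b n)
    (hsum : Summable fun n => 1 / b n) :
    ∀ᵐ α ∂(volume : Measure ℝ), α ∈ Set.Icc (0 : ℝ) 1 →
      ∃ N : ℕ, ∀ n : ℕ, N ≤ n → ∀ a : ℝ,
        (GenContFract.of α).partDens.get? n = some a → a ≤ b n := by
  set B : ℕ → Set ℝ := fun n =>
    (G^[n]) ⁻¹' (Ioo 0 (min (b n)⁻¹ 1)) ∩ Ioo 0 1 with hB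
  have hBmeas : ∀ n, MeasurableSet (B n) := fun n =>
    ((measurable_G.iterate n) measurableSet_Ioo).inter measurableSet_Ioo
  -- ν bound
  have hnuB : ∀ n, ν (B n) ≤ ENNReal.ofReal (1 / b n) := by
    intro n
    rw [hB]
    rw [nu_iter n measurableSet_Ioo (Ioo_subset_Ioo le_rfl (min_le_right _ _))]
    calc ν (Ioo 0 (min (b n)⁻¹ 1))
        = ∫⁻ x in Ioo 0 (min (b n)⁻¹ 1), d x := withDensity_apply d measurableSet_Ioo
      _ ≤ ∫⁻ _x in Ioo 0 (min (b n)⁻¹ 1), 1 := by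
          apply setLIntegral_mono measurable_const
          intro x hx
          rw [d, show (1:ENNReal) = ENNReal.ofReal 1 by simp]
          apply ENNReal.ofReal_le_ofReal
          rw [inv_le_one_iff₀]
          right; linarith [hx.1]
      _ = volume (Ioo 0 (min (b n)⁻¹ 1)) := by rw [setLIntegral_one]
      _ ≤ ENNReal.ofReal (1 / b n) := by
          rw [Real.volume_Ioo, sub_zero, one_div]
          exact ENNReal.ofReal_le_ofReal (min_le_left _ _)
  -- volume vs nu
  have hvolB : ∀ n, volume (B n) ≤ 2 * ν (B n) := by
    intro n
    have h1 : ENNReal.ofReal (2⁻¹) * volume (B n) ≤ ν (B n) := by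
      rw [ν, withDensity_apply d (hBmeas n), ← setLIntegral_const]
      apply setLIntegral_mono measurable_d
      intro x hx
      apply ENNReal.ofReal_le_ofReal
      have hx1 : x < 1 := hx.2.2
      have hx0 : 0 < x := hx.2.1
      have h2 : (1:ℝ) + x ≤ 2 := by linarith
      calc (2:ℝ)⁻¹ ≤ (1+x)⁻¹ := by
            apply inv_anti₀ (by linarith) h2
        _ = _ := rfl
    have h2 : ENNReal.ofReal (2⁻¹) = (2:ENNReal)⁻¹ := by
      rw [ENNReal.ofReal_inv_of_pos two_pos, ENNReal.ofReal_ofNat]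
    rw [h2] at h1
    calc volume (B n) = 2 * (2⁻¹ * volume (B n)) := by
          rw [← mul_assoc, ENNReal.mul_inv_cancel (by norm_num) (by norm_num), one_mul]
      _ ≤ 2 * ν (B n) := mul_le_mul_right h1 2
  -- summability
  have htsum : (∑' n, volume (B n)) ≠ ⊤ := by
    have : (∑' n, volume (B n)) ≤ 2 * ENNReal.ofReal (∑' n, 1 / b n) := by
      calc (∑' n, volume (B n)) ≤ ∑' n, 2 * ENNReal.ofReal (1 / b n) :=
            ENNReal.tsum_le_tsum fun n =>
              (hvolB n).trans (mul_le_mul_right (hnuB n) 2)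
        _ = 2 * ∑' n, ENNReal.ofReal (1 / b n) := ENNReal.tsum_mul_left
        _ = 2 * ENNReal.ofReal (∑' n, 1 / b n) := by
            rw [ENNReal.ofReal_tsum_of_nonneg (fun n => le_of_lt (by have := hb n; positivity)) hsum]
    exact (this.trans_lt (by
      apply ENNReal.mul_lt_top
      · norm_num
      · exact ENNReal.ofReal_lt_top)).ne
  have hae := ae_eventually_notMem htsum
  have h01 : ∀ᵐ x : ℝ ∂volume, x ∉ ({0, 1} : Set ℝ) := by
    have : volume ({0, 1} : Set ℝ) = 0 :=
      (Set.Finite.insert 0 (Set.finite_singleton 1)).measure_zero _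
    exact measure_eq_zero_iff_ae_notMem.mp this
  filter_upwards [hae, h01] with α hev hne hIcc
  have hα : α ∈ Ioo (0:ℝ) 1 := by
    simp only [mem_insert_iff, mem_singleton_iff, not_or] at hne
    exact ⟨hIcc.1.lt_of_ne' hne.1, hIcc.2.lt_of_ne hne.2⟩
  obtain ⟨N, hN⟩ := eventually_atTop.mp hev
  refine ⟨N, fun n hn a ha => ?_⟩
  obtain ⟨hx, hax⟩ := partDen_eq hα ha
  by_contra hgt
  push_neg at hgt
  apply hN n hn
  refine ⟨?_, hα⟩
  have hfloor : a ≤ (G^[n] α)⁻¹ := by rw [hax]; exact Int.floor_le _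
  have hblt : b n < (G^[n] α)⁻¹ := lt_of_lt_of_le hgt hfloor
  have hxlt : G^[n] α < (b n)⁻¹ := by
    rw [← inv_inv (G^[n] α)]
    exact inv_strictAnti₀ (hb n) hblt
  exact ⟨hx.1, lt_min hxlt hx.2⟩


end BorelBernstein
end

/-- Borel–Bernstein theorem, convergence part: if `(b_n)` are positive reals with
`∑ 1/b_n < ∞`, then for Lebesgue-almost every `α ∈ [0,1]` the partial quotients `a_n`
of the continued fraction expansion of `α` satisfy `a_n ≤ b_n` for all large `n`.
Here the `(n+1)`-st partial quotient of `α` is `(GenContFract.of α).partDens.get? n`. -/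
theorem borel_bernstein_convergence (b : ℕ → ℝ) (hb : ∀ n, 0 < b n)
    (hsum : Summable fun n => 1 / b n) :
    ∀ᵐ α ∂(volume : Measure ℝ), α ∈ Set.Icc (0 : ℝ) 1 →
      ∃ N : ℕ, ∀ n : ℕ, N ≤ n → ∀ a : ℝ,
        (GenContFract.of α).partDens.get? n = some a → a ≤ b n :=
  BorelBernstein.borel_bernstein_convergence' b hb hsum
end

section
/- Let u, v be positive integers and let (c_n)_{n ∈ ℤ} be reals with |c_n| ≤ 1/|n| for n ≠ 0. Define C(u,v) := ∑_{n₁,n₂ ∈ ℤ∖{0}, n₁u = n₂v} c_{n₁} c_{n₂}. Then |C(u,v)| ≤ K · gcd(u,v)/max{u,v} for an absolute constant K. -/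
set_option maxHeartbeats 1000000 in
/-- For positive integers `u, v` and reals `(c_n)` with `|c_n| ≤ 1/|n|` for `n ≠ 0`, the sum
`C(u,v) = ∑_{n₁u = n₂v, n₁,n₂ ≠ 0} c_{n₁} c_{n₂}` satisfies
`|C(u,v)| ≤ K·gcd(u,v)/max{u,v}` for an absolute constant `K`. -/
theorem offdiag_fourier_sum_bound :
    ∃ K : ℝ, 0 < K ∧ ∀ (u v : ℕ), 0 < u → 0 < v → ∀ c : ℤ → ℝ,
      (∀ n : ℤ, n ≠ 0 → |c n| ≤ 1 / |(n : ℝ)|) →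
      |∑' p : {p : ℤ × ℤ // p.1 ≠ 0 ∧ p.2 ≠ 0 ∧ p.1 * (u : ℤ) = p.2 * (v : ℤ)},
          c p.1.1 * c p.1.2| ≤
        K * (Nat.gcd u v : ℝ) / (max u v : ℕ) := by
  have hsum_all : Summable (fun n : ℤ => 1 / (n : ℝ) ^ 2) := by
    rw [Real.summable_one_div_int_pow]; norm_num
  have hSsum : Summable (fun h : {h : ℤ // h ≠ 0} => 1 / ((h : ℤ) : ℝ) ^ 2) :=
    hsum_all.subtype _
  set S : ℝ := ∑' h : {h : ℤ // h ≠ 0}, 1 / ((h : ℤ) : ℝ) ^ 2 with hS_def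
  have hSpos : 0 < S := by
    refine Summable.tsum_pos hSsum (fun h => by positivity) ⟨1, one_ne_zero⟩ ?_
    norm_num
  refine ⟨S, hSpos, ?_⟩
  intro u v hu hv c hc
  set g := Nat.gcd u v with hg_def
  have hg : 0 < g := Nat.gcd_pos_of_pos_left v hu
  set u' := u / g with hu'_def
  set v' := v / g with hv'_def
  have hgu : g * u' = u := Nat.mul_div_cancel' (Nat.gcd_dvd_left u v)
  have hgv : g * v' = v := Nat.mul_div_cancel' (Nat.gcd_dvd_right u v)
  have hu' : 0 < u' := Nat.div_pos (Nat.le_of_dvd hu (Nat.gcd_dvd_left u v)) hg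
  have hv' : 0 < v' := Nat.div_pos (Nat.le_of_dvd hv (Nat.gcd_dvd_right u v)) hg
  have hcop : Nat.Coprime u' v' := Nat.coprime_div_gcd_div_gcd hg
  have hcopZ : IsCoprime (u' : ℤ) (v' : ℤ) := Int.isCoprime_iff_gcd_eq_one.mpr (by
    rw [Int.gcd_natCast_natCast]; exact hcop)
  have hu'Z : ((u' : ℤ) : ℤ) ≠ 0 := by exact_mod_cast hu'.ne'
  have hv'Z : (v' : ℤ) ≠ 0 := by exact_mod_cast hv'.ne'
  -- the parametrizing map
  have emem : ∀ h : {h : ℤ // h ≠ 0},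
      ((h : ℤ) * v' ≠ 0 ∧ (h : ℤ) * u' ≠ 0 ∧
        ((h : ℤ) * v') * (u : ℤ) = ((h : ℤ) * u') * (v : ℤ)) := by
    intro h
    refine ⟨mul_ne_zero h.2 hv'Z, mul_ne_zero h.2 hu'Z, ?_⟩
    have h1 : (u : ℤ) = (g : ℤ) * u' := by exact_mod_cast hgu.symm
    have h2 : (v : ℤ) = (g : ℤ) * v' := by exact_mod_cast hgv.symm
    rw [h1, h2]; ring
  let e : {h : ℤ // h ≠ 0} →
      {p : ℤ × ℤ // p.1 ≠ 0 ∧ p.2 ≠ 0 ∧ p.1 * (u : ℤ) = p.2 * (v : ℤ)} :=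
    fun h => ⟨((h : ℤ) * v', (h : ℤ) * u'), emem h⟩
  have hbij : Function.Bijective e := by
    constructor
    · intro a b hab
      have : (a : ℤ) * v' = (b : ℤ) * v' := congrArg (fun p => p.1.1) hab
      exact Subtype.ext (mul_right_cancel₀ hv'Z this)
    · rintro ⟨⟨n₁, n₂⟩, hn₁, hn₂, heq⟩
      have h1 : (u : ℤ) = (g : ℤ) * u' := by exact_mod_cast hgu.symm
      have h2 : (v : ℤ) = (g : ℤ) * v' := by exact_mod_cast hgv.symm
      have hgZ : (g : ℤ) ≠ 0 := by exact_mod_cast hg.ne'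
      have heq' : n₁ * u' = n₂ * v' := by
        have : (g : ℤ) * (n₁ * u') = (g : ℤ) * (n₂ * v') := by
          rw [h1, h2] at heq; linarith [heq]
        exact mul_left_cancel₀ hgZ this
      have hdvd : (v' : ℤ) ∣ n₁ := by
        have : (v' : ℤ) ∣ n₁ * u' := ⟨n₂, by linarith [heq']⟩
        exact (hcopZ.symm.dvd_of_dvd_mul_right this)
      obtain ⟨h, hh⟩ := hdvd
      have hh0 : h ≠ 0 := by rintro rfl; simp at hh; exact hn₁ hh
      have hn2 : n₂ = h * u' := by
        have : (h * (u' : ℤ)) * v' = n₂ * v' := by rw [← heq', hh]; ring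
        exact (mul_right_cancel₀ hv'Z this).symm
      refine ⟨⟨h, hh0⟩, Subtype.ext (Prod.ext ?_ ?_)⟩
      · show h * (v' : ℤ) = n₁
        rw [hh]; ring
      · show h * (u' : ℤ) = n₂
        rw [hn2]
  let E := Equiv.ofBijective e hbij
  have htsum_eq :
      ∑' p : {p : ℤ × ℤ // p.1 ≠ 0 ∧ p.2 ≠ 0 ∧ p.1 * (u : ℤ) = p.2 * (v : ℤ)},
        c p.1.1 * c p.1.2
      = ∑' h : {h : ℤ // h ≠ 0}, c ((h : ℤ) * v') * c ((h : ℤ) * u') :=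
    (E.tsum_eq _).symm
  -- pointwise bound
  have hu'R : (0 : ℝ) < (u' : ℝ) := by exact_mod_cast hu'
  have hv'R : (0 : ℝ) < (v' : ℝ) := by exact_mod_cast hv'
  have hpt : ∀ h : {h : ℤ // h ≠ 0},
      |c ((h : ℤ) * v') * c ((h : ℤ) * u')| ≤
        1 / ((h : ℤ) : ℝ) ^ 2 * (1 / ((u' : ℝ) * (v' : ℝ))) := by
    intro h
    have h0 : ((h : ℤ) : ℝ) ≠ 0 := by exact_mod_cast h.2
    have b1 := hc _ (mul_ne_zero h.2 hv'Z)
    have b2 := hc _ (mul_ne_zero h.2 hu'Z)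
    have key : |c ((h : ℤ) * v')| * |c ((h : ℤ) * u')| ≤
        (1 / |(((h : ℤ) * v' : ℤ) : ℝ)|) * (1 / |(((h : ℤ) * u' : ℤ) : ℝ)|) :=
      mul_le_mul b1 b2 (abs_nonneg _) (by positivity)
    rw [abs_mul]
    refine key.trans ?_
    have e1 : |(((h : ℤ) * v' : ℤ) : ℝ)| = |((h : ℤ) : ℝ)| * (v' : ℝ) := by
      push_cast; rw [abs_mul, abs_of_pos hv'R]
    have e2 : |(((h : ℤ) * u' : ℤ) : ℝ)| = |((h : ℤ) : ℝ)| * (u' : ℝ) := by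
      push_cast; rw [abs_mul, abs_of_pos hu'R]
    rw [e1, e2]
    have : |((h : ℤ) : ℝ)| * (v' : ℝ) * (|((h : ℤ) : ℝ)| * (u' : ℝ))
        = ((h : ℤ) : ℝ) ^ 2 * ((u' : ℝ) * (v' : ℝ)) := by
      rw [← sq_abs]; ring
    rw [one_div_mul_one_div, this, one_div_mul_one_div]
  -- summability
  have hmaj : Summable (fun h : {h : ℤ // h ≠ 0} =>
      1 / ((h : ℤ) : ℝ) ^ 2 * (1 / ((u' : ℝ) * (v' : ℝ)))) := hSsum.mul_right _
  have habs : Summable (fun h : {h : ℤ // h ≠ 0} =>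
      |c ((h : ℤ) * v') * c ((h : ℤ) * u')|) :=
    Summable.of_nonneg_of_le (fun _ => abs_nonneg _) hpt hmaj
  have hsumf : Summable (fun h : {h : ℤ // h ≠ 0} =>
      c ((h : ℤ) * v') * c ((h : ℤ) * u')) := habs.of_abs
  calc |∑' p : {p : ℤ × ℤ // p.1 ≠ 0 ∧ p.2 ≠ 0 ∧ p.1 * (u : ℤ) = p.2 * (v : ℤ)},
          c p.1.1 * c p.1.2|
      = |∑' h : {h : ℤ // h ≠ 0}, c ((h : ℤ) * v') * c ((h : ℤ) * u')| := by
        rw [htsum_eq]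
    _ ≤ ∑' h : {h : ℤ // h ≠ 0}, |c ((h : ℤ) * v') * c ((h : ℤ) * u')| :=
        by
          have h1 : Summable fun h : {h : ℤ // h ≠ 0} =>
              ‖c ((h : ℤ) * v') * c ((h : ℤ) * u')‖ := by
            simpa only [Real.norm_eq_abs] using habs
          simpa only [Real.norm_eq_abs] using norm_tsum_le_tsum_norm h1
    _ ≤ ∑' h : {h : ℤ // h ≠ 0}, 1 / ((h : ℤ) : ℝ) ^ 2 * (1 / ((u' : ℝ) * (v' : ℝ))) :=
        Summable.tsum_le_tsum hpt habs hmaj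
    _ = S * (1 / ((u' : ℝ) * (v' : ℝ))) := tsum_mul_right
    _ ≤ S * (Nat.gcd u v : ℝ) / (max u v : ℕ) := by
        have hmax : ((max u v : ℕ) : ℝ) = (g : ℝ) * (max u' v' : ℕ) := by
          rw [show max u v = g * max u' v' by
            rw [← hgu, ← hgv, Nat.mul_max_mul_left]]
          push_cast; ring
        have hgR : (0 : ℝ) < (g : ℝ) := by exact_mod_cast hg
        have hmaxR : (0 : ℝ) < ((max u' v' : ℕ) : ℝ) := by
          have : 0 < max u' v' := lt_max_of_lt_left hu'
          exact_mod_cast this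
        rw [hmax, ← hg_def]
        rw [show S * (g : ℝ) / ((g : ℝ) * (max u' v' : ℕ)) = S / (max u' v' : ℕ) by
          field_simp]
        have h1 : ((max u' v' : ℕ) : ℝ) ≤ (u' : ℝ) * (v' : ℝ) := by
          have : max u' v' ≤ u' * v' := by
            rcases max_cases u' v' with ⟨h, _⟩ | ⟨h, _⟩ <;> rw [h] <;> nlinarith
          exact_mod_cast this
        rw [mul_one_div]
        exact div_le_div_of_nonneg_left hSpos.le hmaxR h1
end

section
/- Sandwich argument for pair correlations: let (R_N)_N be functions of s > 0 of the form R_N(s) = (1/N)·#{1 ≤ i ≠ j ≤ N : ‖x_i − x_j‖ ≤ s/N} for a fixed sequence (x_n) in [0,1]. If (N_m) is an increasing sequence of integers with N_{m+1}/N_m → 1 and R_{N_m}(s) → 2s as m → ∞ for every rational s > 0, then R_N(s) → 2s as N → ∞ for every real s > 0. -/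
open Filter

/-- Distance to the nearest integer. -/
noncomputable def distNearestInt (x : ℝ) : ℝ := |x - (round x : ℤ)|

/-- The pair correlation function
`R_N(s) = (1/N)·#{1 ≤ i ≠ j ≤ N : ‖x_i − x_j‖ ≤ s/N}`. -/
noncomputable def pairCorr (x : ℕ → ℝ) (N : ℕ) (s : ℝ) : ℝ :=
  (1 / (N : ℝ)) *
    ((((Finset.Icc 1 N) ×ˢ (Finset.Icc 1 N)).filter fun p =>
      p.1 ≠ p.2 ∧ distNearestInt (x p.1 - x p.2) ≤ s / (N : ℝ)).card : ℝ)

/-!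
Write `N·R_N(s) = C_N(s/N)`, where `C_N(t)` counts the pairs `i ≠ j ≤ N` with
`‖x_i − x_j‖ ≤ t`; it is monotone in both `N` and `t`. For `N_m < N ≤ N_{m+1}` and
rationals `q < s < q'` this gives
`(N_m/N_{m+1})·R_{N_m}(q) ≤ R_N(s) ≤ (N_{m+1}/N_m)·R_{N_{m+1}}(q')`
as soon as `N_{m+1}/N_m ≤ min (s/q) (q'/s)`, which holds for large `m`. The outer terms tend
to `2q` and `2q'`, which can be taken arbitrarily close to `2s`.
-/

open Finset

noncomputable def pairCount (x : ℕ → ℝ) (N : ℕ) (t : ℝ) : ℕ :=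
  #{p ∈ Icc 1 N ×ˢ Icc 1 N | p.1 ≠ p.2 ∧ distNearestInt (x p.1 - x p.2) ≤ t}

lemma pairCount_mono (x : ℕ → ℝ) {N N' : ℕ} {t t' : ℝ} (hN : N ≤ N') (ht : t ≤ t') :
    pairCount x N t ≤ pairCount x N' t' := by
  have hIcc : Icc 1 N ⊆ Icc 1 N' := Icc_subset_Icc_right hN
  refine card_le_card ((filter_subset_filter _ (product_subset_product hIcc hIcc)).trans ?_)
  exact monotone_filter_right _ fun _ _ hp => ⟨hp.1, hp.2.trans ht⟩

lemma pairCorr_eq_pairCount_div (x : ℕ → ℝ) (N : ℕ) (s : ℝ) :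
    pairCorr x N s = pairCount x N (s / N) / N := by
  rw [pairCorr, pairCount, one_div_mul_eq_div]

variable (x : ℕ → ℝ) {M N M' : ℕ} {s q : ℝ}

lemma pairCorr_le_mul_pairCorr (hM : 0 < M) (hMN : M ≤ N) (hNM' : N ≤ M') (hq : 0 ≤ q)
    (h : (M' : ℝ) * s ≤ q * M) : pairCorr x N s ≤ (M' / M) * pairCorr x M' q := by
  have hM₀ : (0 : ℝ) < M := by exact_mod_cast hM
  have hN₀ : (0 : ℝ) < N := by exact_mod_cast hM.trans_le hMN
  have hM'₀ : (0 : ℝ) < M' := by exact_mod_cast hM.trans_le (hMN.trans hNM')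
  have hMN_cast : (M : ℝ) ≤ N := by exact_mod_cast hMN
  have hthreshold : s / N ≤ q / M' := by
    rw [div_le_div_iff₀ hN₀ hM'₀]
    nlinarith [mul_le_mul_of_nonneg_left hMN_cast hq]
  calc pairCorr x N s = pairCount x N (s / N) / N := pairCorr_eq_pairCount_div x N s
    _ ≤ pairCount x M' (q / M') / M :=
      div_le_div₀ (by positivity) (by exact_mod_cast pairCount_mono x hNM' hthreshold) hM₀
        hMN_cast
    _ = (M' / M) * pairCorr x M' q := by
      rw [pairCorr_eq_pairCount_div]
      field_simp

lemma mul_pairCorr_le_pairCorr (hM : 0 < M) (hMN : M ≤ N) (hNM' : N ≤ M') (hq : 0 ≤ q)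
    (h : (M' : ℝ) * q ≤ s * M) : (M / M') * pairCorr x M q ≤ pairCorr x N s := by
  have hM₀ : (0 : ℝ) < M := by exact_mod_cast hM
  have hN₀ : (0 : ℝ) < N := by exact_mod_cast hM.trans_le hMN
  have hM'₀ : (0 : ℝ) < M' := by exact_mod_cast hM.trans_le (hMN.trans hNM')
  have hNM'_cast : (N : ℝ) ≤ M' := by exact_mod_cast hNM'
  have hthreshold : q / M ≤ s / N := by
    rw [div_le_div_iff₀ hM₀ hN₀]
    nlinarith [mul_le_mul_of_nonneg_left hNM'_cast hq]
  calc (M / M') * pairCorr x M q = pairCount x M (q / M) / M' := by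
        rw [pairCorr_eq_pairCount_div]
        field_simp
    _ ≤ pairCount x N (s / N) / N :=
      div_le_div₀ (by positivity) (by exact_mod_cast pairCount_mono x hMN hthreshold) hN₀
        hNM'_cast
    _ = pairCorr x N s := (pairCorr_eq_pairCount_div x N s).symm

theorem StrictMono.eventually_of_eventually_forall_Ioc {P : ℕ → Prop} {t : ℕ → ℕ}
    (ht : StrictMono t) (h : ∀ᶠ m in atTop, ∀ N ∈ Set.Ioc (t m) (t (m + 1)), P N) :
    ∀ᶠ N in atTop, P N := by
  obtain ⟨M, hM⟩ := eventually_atTop.1 h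
  filter_upwards [eventually_gt_atTop (t M)] with N hN
  obtain ⟨m, hm_lt, hm_le⟩ :=
    ht.exists_between_of_tendsto_atTop ht.tendsto_atTop ((ht.monotone M.zero_le).trans_lt hN)
  exact hM m (Nat.lt_succ_iff.1 (ht.lt_iff_lt.1 (hN.trans_le hm_le))) N ⟨hm_lt, hm_le⟩

variable {Nm : ℕ → ℕ}

lemma eventually_lt_pairCorr (hNm : StrictMono Nm)
    (hratio : Tendsto (fun m => (Nm (m + 1) : ℝ) / Nm m) atTop (nhds 1))
    (hconv : ∀ q : ℚ, 0 < q → Tendsto (fun m => pairCorr x (Nm m) q) atTop (nhds (2 * q)))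
    (hs : 0 < s) {a : ℝ} (ha : a < 2 * s) : ∀ᶠ N in atTop, a < pairCorr x N s := by
  obtain ⟨q, hq_gt, hq_lt⟩ := exists_rat_btwn (max_lt (by linarith : a / 2 < s) hs)
  have hq : (0 : ℝ) < q := (le_max_right _ _).trans_lt hq_gt
  have hlim : Tendsto (fun m => ((Nm m : ℝ) / Nm (m + 1)) * pairCorr x (Nm m) q) atTop
      (nhds (2 * q)) := by
    simpa only [inv_div, inv_one, one_mul] using
      (hratio.inv₀ one_ne_zero).mul (hconv q (by exact_mod_cast hq))
  apply hNm.eventually_of_eventually_forall_Ioc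
  have hq_lim : a < 2 * (q : ℝ) := by linarith [le_max_left (a / 2) 0]
  filter_upwards [hlim.eventually_const_lt hq_lim,
    hratio.eventually_lt_const ((one_lt_div hq).2 hq_lt),
    hNm.tendsto_atTop.eventually_gt_atTop 0] with m hm_lim hm_ratio hm_pos N ⟨hN_gt, hN_le⟩
  have hsep : (Nm (m + 1) : ℝ) * q ≤ s * Nm m :=
    ((div_lt_div_iff₀ (by exact_mod_cast hm_pos) hq).1 hm_ratio).le
  exact hm_lim.trans_le (mul_pairCorr_le_pairCorr x hm_pos hN_gt.le hN_le hq.le hsep)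

lemma eventually_pairCorr_lt (hNm : StrictMono Nm)
    (hratio : Tendsto (fun m => (Nm (m + 1) : ℝ) / Nm m) atTop (nhds 1))
    (hconv : ∀ q : ℚ, 0 < q → Tendsto (fun m => pairCorr x (Nm m) q) atTop (nhds (2 * q)))
    (hs : 0 < s) {b : ℝ} (hb : 2 * s < b) : ∀ᶠ N in atTop, pairCorr x N s < b := by
  obtain ⟨q, hq_gt, hq_lt⟩ := exists_rat_btwn (by linarith : s < b / 2)
  have hq : (0 : ℝ) < q := hs.trans hq_gt
  have hlim : Tendsto (fun m => ((Nm (m + 1) : ℝ) / Nm m) * pairCorr x (Nm (m + 1)) q) atTop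
      (nhds (2 * q)) := by
    simpa only [one_mul, Function.comp_def] using
      hratio.mul ((hconv q (by exact_mod_cast hq)).comp (tendsto_add_atTop_nat 1))
  apply hNm.eventually_of_eventually_forall_Ioc
  filter_upwards [hlim.eventually_lt_const (show 2 * (q : ℝ) < b by linarith),
    hratio.eventually_lt_const ((one_lt_div hs).2 hq_gt),
    hNm.tendsto_atTop.eventually_gt_atTop 0] with m hm_lim hm_ratio hm_pos N ⟨hN_gt, hN_le⟩
  have hsep : (Nm (m + 1) : ℝ) * s ≤ q * Nm m :=
    ((div_lt_div_iff₀ (by exact_mod_cast hm_pos) hs).1 hm_ratio).le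
  exact (pairCorr_le_mul_pairCorr x hm_pos hN_gt.le hN_le hq.le hsep).trans_lt hm_lim

theorem pair_corr_sandwich_general (x : ℕ → ℝ)
    (Nm : ℕ → ℕ) (hNm : StrictMono Nm)
    (hratio : Tendsto (fun m => (Nm (m + 1) : ℝ) / (Nm m : ℝ)) atTop (nhds 1))
    (hconv : ∀ s : ℚ, 0 < s →
      Tendsto (fun m => pairCorr x (Nm m) (s : ℝ)) atTop (nhds (2 * (s : ℝ)))) :
    ∀ s : ℝ, 0 < s → Tendsto (fun N => pairCorr x N s) atTop (nhds (2 * s)) := fun _ hs =>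
  tendsto_order.2 ⟨fun _ ha => eventually_lt_pairCorr x hNm hratio hconv hs ha,
    fun _ hb => eventually_pairCorr_lt x hNm hratio hconv hs hb⟩

/-- Sandwich argument: if `(N_m)` is increasing with `N_{m+1}/N_m → 1` and
`R_{N_m}(s) → 2s` for all rational `s > 0`, then `R_N(s) → 2s` for all real `s > 0`. -/
theorem pair_corr_sandwich (x : ℕ → ℝ) (hx : ∀ n, x n ∈ Set.Icc (0 : ℝ) 1)
    (Nm : ℕ → ℕ) (hNm : StrictMono Nm) (hpos : ∀ m, 1 ≤ Nm m)
    (hratio : Tendsto (fun m => (Nm (m + 1) : ℝ) / (Nm m : ℝ)) atTop (nhds 1))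
    (hconv : ∀ s : ℚ, 0 < s →
      Tendsto (fun m => pairCorr x (Nm m) (s : ℝ)) atTop (nhds (2 * (s : ℝ)))) :
    ∀ s : ℝ, 0 < s → Tendsto (fun N => pairCorr x N s) atTop (nhds (2 * s)) :=
  pair_corr_sandwich_general x Nm hNm hratio hconv
end
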